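/- arXiv:1402.0861 — 7 statements merged into one kernel-verified Lean document; each statement's English description precedes it below -/
import Mathlib

section
/- For 0 ≤ r < min(j, n-j), the inequality C(j, j-r)·C(n-j, r) ≤ C(j, j-r-1)·C(n-j, r+1) holds if and only if r ≤ (nj - j² - 1)/(n + 2). -/
theorem ring_size_mono_iff (n j r : ℕ) (hj : 1 ≤ j) (hjn : j ≤ n - 1)
    (hr : r < min j (n - j)) :
    j.choose (j - r) * (n - j).choose r ≤ j.choose (j - r - 1) * (n - j).choose (r + 1)
      ↔ (r : ℤ) * (n + 2) ≤ (n : ℤ) * j - j ^ 2 - 1 := by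
  obtain ⟨hrj, hrb⟩ := lt_min_iff.mp hr
  have hjn' : j ≤ n := by omega
  have h1 : j.choose (j - r) = j.choose r := Nat.choose_symm hrj.le
  have h2 : j.choose (j - r - 1) = j.choose (r + 1) := by
    have : j - r - 1 = j - (r + 1) := by omega
    rw [this, Nat.choose_symm hrj]
  rw [h1, h2]
  have kj := Nat.choose_succ_right_eq j r
  have kb := Nat.choose_succ_right_eq (n - j) r
  have key : (j.choose (r+1) * (n-j).choose (r+1)) * ((r+1)*(r+1))
      = (j.choose r * (n-j).choose r) * ((j-r)*((n-j)-r)) := by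
    calc (j.choose (r+1) * (n-j).choose (r+1)) * ((r+1)*(r+1))
        = (j.choose (r+1)*(r+1)) * ((n-j).choose (r+1)*(r+1)) := by ring
      _ = (j.choose r * (j-r)) * ((n-j).choose r * ((n-j)-r)) := by rw [kj, kb]
      _ = _ := by ring
  have hpos : 0 < j.choose r * (n-j).choose r :=
    Nat.mul_pos (Nat.choose_pos hrj.le) (Nat.choose_pos hrb.le)
  have hiff : j.choose r * (n-j).choose r ≤ j.choose (r+1) * (n-j).choose (r+1)
      ↔ (r+1)*(r+1) ≤ (j-r)*((n-j)-r) := by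
    constructor
    · intro h
      have h3 := Nat.mul_le_mul_right ((r+1)*(r+1)) h
      rw [key] at h3
      exact Nat.le_of_mul_le_mul_left h3 hpos
    · intro h
      have h3 := Nat.mul_le_mul_left (j.choose r * (n-j).choose r) h
      rw [← key] at h3
      have hp : 0 < (r+1)*(r+1) := by positivity
      exact Nat.le_of_mul_le_mul_right h3 hp
  rw [hiff]
  zify [hrj.le, hrb.le, hjn']
  constructor <;> intro h <;> nlinarith [h]
end

section
/- Fix a j-element subset v of [n] and a j-element subset v_r with |v ∩ v_r| = j - r. The number of k-element subsets C of [n] satisfying v_r ⊆ C and |C ∩ v| = j - m equals C(r, r-m)·C(n-j-r, k-j+m-r). -/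
open Finset

theorem committee_containing_list_card (n j k r m : ℕ) (hjk : j ≤ k) (hkn : k ≤ n)
    (hmr : m ≤ r) (hrD : r ≤ min j (n - j)) (hjr : j + r ≤ k + m) (hkm : k + m ≤ n)
    (v vr : Finset (Fin n)) (hv : v.card = j) (hvr : vr.card = j)
    (hinter : (v ∩ vr).card = j - r) :
    (((univ : Finset (Fin n)).powersetCard k).filter
        (fun C => vr ⊆ C ∧ (C ∩ v).card = j - m)).card
      = r.choose (r - m) * (n - j - r).choose (k + m - j - r) := by
  have hrj : r ≤ j := le_trans hrD (min_le_left _ _)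
  have hrn : r ≤ n - j := le_trans hrD (min_le_right _ _)
  have hjn : j ≤ n := hjk.trans hkn
  have hsd : (v \ vr).card = r := by
    have := Finset.card_inter_add_card_sdiff v vr
    omega
  have hun : (v ∪ vr).card = j + r := by
    have := Finset.card_inter_add_card_union v vr
    omega
  have hcompl : ((v ∪ vr)ᶜ).card = n - j - r := by
    rw [Finset.card_compl, hun, Fintype.card_fin]
    omega
  rw [show r.choose (r - m) * (n - j - r).choose (k + m - j - r)
      = ((v \ vr).powersetCard (r - m) ×ˢ ((v ∪ vr)ᶜ).powersetCard (k + m - j - r)).card by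
    rw [Finset.card_product, Finset.card_powersetCard, Finset.card_powersetCard, hsd, hcompl]]
  apply Finset.card_bij' (fun C _ => (C ∩ (v \ vr), C \ (v ∪ vr)))
    (fun p _ => vr ∪ p.1 ∪ p.2)
  · -- hi : forward maps into product
    intro C hC
    rw [Finset.mem_filter, Finset.mem_powersetCard_univ] at hC
    obtain ⟨hCk, hsub, hCm⟩ := hC
    have hvvr : v ∩ vr ⊆ C ∩ v := by
      intro x hx
      rw [Finset.mem_inter] at hx ⊢
      exact ⟨hsub hx.2, hx.1⟩
    have h1 : C ∩ (v \ vr) = (C ∩ v) \ (v ∩ vr) := by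
      ext x
      simp only [Finset.mem_inter, Finset.mem_sdiff]
      tauto
    have h2 : C ∩ (v ∪ vr) = (C ∩ v) ∪ vr := by
      ext x
      simp only [Finset.mem_inter, Finset.mem_union]
      have := @hsub x
      tauto
    have h3 : (C ∩ v) ∩ vr = v ∩ vr := by
      ext x
      simp only [Finset.mem_inter]
      have := @hsub x
      tauto
    have hcap : (C ∩ (v ∪ vr)).card = j + r - m := by
      have := Finset.card_inter_add_card_union (C ∩ v) vr
      rw [← h2, h3] at this
      omega
    simp only [Finset.mem_product, Finset.mem_powersetCard]
    refine ⟨⟨Finset.inter_subset_right, ?_⟩, ?_, ?_⟩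
    · rw [h1, Finset.card_sdiff_of_subset hvvr, hCm, hinter]
      omega
    · intro x hx
      rw [Finset.mem_sdiff] at hx
      rw [Finset.mem_compl]
      exact hx.2
    · show (C \ (v ∪ vr)).card = k + m - j - r
      have := Finset.card_sdiff_add_card_inter C (v ∪ vr)
      omega
  · -- hj : backward maps into filter
    rintro ⟨A, B⟩ hp
    simp only [Finset.mem_product, Finset.mem_powersetCard] at hp
    obtain ⟨⟨hAs, hAc⟩, hBs, hBc⟩ := hp
    have hA : ∀ x ∈ A, x ∈ v ∧ x ∉ vr := by
      intro x hx
      have := hAs hx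
      rwa [Finset.mem_sdiff] at this
    have hB : ∀ x ∈ B, x ∉ v ∧ x ∉ vr := by
      intro x hx
      have := hBs hx
      rw [Finset.mem_compl, Finset.mem_union] at this
      tauto
    have d1 : Disjoint vr A := Finset.disjoint_left.2 fun x hxr hxA => (hA x hxA).2 hxr
    have d2 : Disjoint (vr ∪ A) B := Finset.disjoint_left.2 fun x hx hxB => by
      rw [Finset.mem_union] at hx
      rcases hx with h | h
      · exact (hB x hxB).2 h
      · exact (hB x hxB).1 (hA x h).1
    rw [Finset.mem_filter, Finset.mem_powersetCard_univ]
    refine ⟨?_, ?_, ?_⟩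
    · rw [Finset.card_union_of_disjoint d2, Finset.card_union_of_disjoint d1]
      omega
    · exact (Finset.subset_union_left).trans Finset.subset_union_left
    · have h4 : (vr ∪ A ∪ B) ∩ v = (v ∩ vr) ∪ A := by
        ext x
        simp only [Finset.mem_inter, Finset.mem_union]
        constructor
        · rintro ⟨h | h, hv'⟩
          · rcases h with h | h
            · exact Or.inl ⟨hv', h⟩
            · exact Or.inr h
          · exact absurd hv' (hB x h).1
        · rintro (⟨h1, h2⟩ | h)
          · exact ⟨Or.inl (Or.inl h2), h1⟩
          · exact ⟨Or.inl (Or.inr h), (hA x h).1⟩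
      have d3 : Disjoint (v ∩ vr) A := Finset.disjoint_left.2 fun x hx hxA =>
        (hA x hxA).2 (Finset.mem_inter.1 hx).2
      rw [h4, Finset.card_union_of_disjoint d3, hinter, hAc]
      omega
  · -- left inverse
    intro C hC
    rw [Finset.mem_filter] at hC
    obtain ⟨_, hsub, _⟩ := hC
    ext x
    simp only [Finset.mem_union, Finset.mem_inter, Finset.mem_sdiff]
    have := @hsub x
    by_cases hxv : x ∈ v <;> by_cases hxr : x ∈ vr <;> tauto
  · -- right inverse
    rintro ⟨A, B⟩ hp
    simp only [Finset.mem_product, Finset.mem_powersetCard] at hp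
    obtain ⟨⟨hAs, _⟩, hBs, _⟩ := hp
    have hA : ∀ x ∈ A, x ∈ v ∧ x ∉ vr := by
      intro x hx
      have := hAs hx
      rwa [Finset.mem_sdiff] at this
    have hB : ∀ x ∈ B, x ∉ v ∧ x ∉ vr := by
      intro x hx
      have := hBs hx
      rw [Finset.mem_compl, Finset.mem_union] at this
      tauto
    refine Prod.ext ?_ ?_
    · ext x
      simp only [Finset.mem_inter, Finset.mem_union, Finset.mem_sdiff]
      constructor
      · rintro ⟨h | h, hv', hnr⟩
        · rcases h with h | h
          · exact absurd h hnr
          · exact h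
        · exact absurd hv' (hB x h).1
      · intro h
        exact ⟨Or.inl (Or.inr h), (hA x h).1, (hA x h).2⟩
    · ext x
      simp only [Finset.mem_sdiff, Finset.mem_union]
      constructor
      · rintro ⟨h | h, hn⟩
        · rcases h with h | h
          · exact absurd (Or.inr h) hn
          · exact absurd (Or.inl (hA x h).1) hn
        · exact h
      · intro h
        exact ⟨Or.inr h, by rintro (h1 | h2); exacts [(hB x h).1 h1, (hB x h).2 h2]⟩
end

section
/- Let P° be the concentric distribution centered at a j-subset v, assigning to each j-subset in the ring R_r(v) the weight w_r / (C(j,j-r)·C(n-j,r)), where the w_r are nonnegative and sum to 1. Then for every k-subset C with |C ∩ v| = j - m, the approval proportion satisfies π_{P°}(C) = Σ_{r=m}^{D} w_r · [C(j-m, j-r)·C(k+m-j, r)] / [C(j, r)·C(n-j, r)], where D = min(j, n-j). In particular π_{P°}(C) depends only on m. -/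
/-!
Sort the `j`-subsets `ℓ ⊆ C` by their ring index `r = |ℓ \ v|`. On ring `r` the concentric
distribution is constant, equal to `w r / (C(j, r) C(n - j, r))`, and `ℓ ↦ (ℓ ∩ v, ℓ \ v)`
identifies the `j`-subsets of `C` in ring `r` with pairs of a `(j - r)`-subset of `C ∩ v` and an
`r`-subset of `C \ v`, of which there are `C(j - m, j - r) C(k + m - j, r)`.
-/

open Finset

section
variable {α : Type*} [DecidableEq α]

theorem union_inter_eq_and_union_sdiff_eq {s t v : Finset α} (hs : s ⊆ v) (ht : Disjoint t v) :
    (s ∪ t) ∩ v = s ∧ (s ∪ t) \ v = t := by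
  constructor <;> ext a <;> grind [disjoint_left]

theorem card_filter_powersetCard_card_sdiff (C v : Finset α) {j r : ℕ} (hr : r ≤ j) :
    #{ℓ ∈ C.powersetCard j | #(ℓ \ v) = r}
      = (#(C ∩ v)).choose (j - r) * (#(C \ v)).choose r := by
  rw [← card_powersetCard, ← card_powersetCard, ← card_product]
  refine card_bij' (fun ℓ _ => (ℓ ∩ v, ℓ \ v)) (fun p _ => p.1 ∪ p.2) ?_ ?_ ?_ ?_
  · intro ℓ hℓ
    simp only [mem_filter, mem_powersetCard] at hℓ
    obtain ⟨⟨hℓC, hℓj⟩, hℓr⟩ := hℓ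
    have := card_inter_add_card_sdiff ℓ v
    simp only [mem_product, mem_powersetCard]
    exact ⟨⟨inter_subset_inter_right hℓC, by omega⟩, sdiff_subset_sdiff hℓC le_rfl, hℓr⟩
  · rintro ⟨s, t⟩ hmem
    simp only [mem_product, mem_powersetCard] at hmem
    obtain ⟨⟨hsC, hs⟩, htC, ht⟩ := hmem
    have hst : Disjoint s t :=
      disjoint_of_subset_left hsC (disjoint_of_subset_right htC disjoint_inf_sdiff)
    have hsplit := union_inter_eq_and_union_sdiff_eq (hsC.trans inter_subset_right)
      (disjoint_of_subset_left htC sdiff_disjoint)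
    simp only [mem_filter, mem_powersetCard, hsplit.2, card_union_of_disjoint hst]
    exact ⟨⟨union_subset (hsC.trans inter_subset_left) (htC.trans sdiff_subset), by omega⟩, ht⟩
  · intro ℓ _
    exact sup_inf_sdiff ℓ v
  · rintro ⟨s, t⟩ hmem
    simp only [mem_product, mem_powersetCard] at hmem
    obtain ⟨⟨hsC, -⟩, htC, -⟩ := hmem
    have hsplit := union_inter_eq_and_union_sdiff_eq (hsC.trans inter_subset_right)
      (disjoint_of_subset_left htC sdiff_disjoint)
    rw [hsplit.1, hsplit.2]

theorem card_sdiff_le_card_sub_card [Fintype α] (s v : Finset α) :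
    #(s \ v) ≤ Fintype.card α - #v := by
  rw [← card_univ_sdiff]
  exact card_le_card (sdiff_subset_sdiff (subset_univ s) le_rfl)

end

theorem concentric_approval_general (n j k m : ℕ)
    (hmj : m ≤ j)
    (v : Finset (Fin n)) (hv : v.card = j)
    (w : ℕ → ℝ)
    -- the concentric distribution centered at `v` with ring weights `w`
    (Pc : Finset (Fin n) → ℝ)
    (hPc : ∀ ℓ : Finset (Fin n), ℓ.card = j →
      Pc ℓ = w (j - (v ∩ ℓ).card)
        / ((j.choose ((v ∩ ℓ).card) * (n - j).choose (j - (v ∩ ℓ).card) : ℕ) : ℝ))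
    (C : Finset (Fin n)) (hC : C.card = k) (hCv : (C ∩ v).card = j - m) :
    ∑ ℓ ∈ C.powersetCard j, Pc ℓ
      = ∑ r ∈ Icc m (min j (n - j)),
          w r * (((j - m).choose (j - r) * (k + m - j).choose r : ℕ) : ℝ)
            / ((j.choose r * (n - j).choose r : ℕ) : ℝ) := by
  have hCv' : #(C \ v) = k + m - j := by
    have := card_inter_add_card_sdiff C v
    omega
  have hPc_ring : ∀ ℓ ∈ C.powersetCard j, Pc ℓ
      = w #(ℓ \ v) / ((j.choose #(ℓ \ v) * (n - j).choose #(ℓ \ v) : ℕ) : ℝ) := by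
    intro ℓ hℓ
    have hℓj := (mem_powersetCard.1 hℓ).2
    have hsdiff : #(ℓ \ v) = j - #(v ∩ ℓ) := by rw [card_sdiff, hℓj]
    rw [hPc ℓ hℓj, hsdiff, Nat.choose_symm (hℓj ▸ card_le_card inter_subset_right)]
  have hring : ∀ ℓ ∈ C.powersetCard j, #(ℓ \ v) ∈ Icc m (min j (n - j)) := by
    intro ℓ hℓ
    obtain ⟨hℓC, hℓj⟩ := mem_powersetCard.1 hℓ
    have hin : #(ℓ ∩ v) ≤ j - m := hCv ▸ card_le_card (inter_subset_inter_right hℓC)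
    have hout : #(ℓ \ v) ≤ n - j := by
      simpa only [Fintype.card_fin, hv] using card_sdiff_le_card_sub_card ℓ v
    have := card_inter_add_card_sdiff ℓ v
    rw [mem_Icc]
    omega
  rw [sum_congr rfl hPc_ring, ← sum_fiberwise_of_maps_to hring]
  refine sum_congr rfl fun r hr => ?_
  rw [sum_congr rfl fun ℓ hℓ => by rw [(mem_filter.1 hℓ).2], sum_const,
    card_filter_powersetCard_card_sdiff C v ((mem_Icc.1 hr).2.trans (min_le_left _ _)),
    hCv, hCv', nsmul_eq_mul]
  push_cast
  ring

theorem concentric_approval (n j k m : ℕ) (hjk : j ≤ k) (hkn : k ≤ n)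
    (hmj : m ≤ j) (hmk : m ≤ n - k)
    (v : Finset (Fin n)) (hv : v.card = j)
    (w : ℕ → ℝ) (hw0 : ∀ r, 0 ≤ w r)
    (hw1 : ∑ r ∈ range (min j (n - j) + 1), w r = 1)
    -- the concentric distribution centered at `v` with ring weights `w`
    (Pc : Finset (Fin n) → ℝ)
    (hPc : ∀ ℓ : Finset (Fin n), ℓ.card = j →
      Pc ℓ = w (j - (v ∩ ℓ).card)
        / ((j.choose ((v ∩ ℓ).card) * (n - j).choose (j - (v ∩ ℓ).card) : ℕ) : ℝ))
    (C : Finset (Fin n)) (hC : C.card = k) (hCv : (C ∩ v).card = j - m) :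
    ∑ ℓ ∈ C.powersetCard j, Pc ℓ
      = ∑ r ∈ Icc m (min j (n - j)),
          w r * (((j - m).choose (j - r) * (k + m - j).choose r : ℕ) : ℝ)
            / ((j.choose r * (n - j).choose r : ℕ) : ℝ) :=
  concentric_approval_general n j k m hmj v hv w Pc hPc C hC hCv
end

section
/- Let P be any probability distribution on j-subsets of [n], fix a j-subset v, and let P° be the concentric distribution centered at v with the same ring weights as P. If C° is a k-subset maximizing π_{P°}, then there exists a k-subset Ĉ with π_P(Ĉ) ≥ π_{P°}(C°). That is, the maximum approval proportion under P is at least the maximum approval proportion under P°. -/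
open Finset

/-!
Ring weights determine `π` on average: let `O` be the family of `k`-sets meeting `v` in as many
points as `C°`. Permutations preserving `v` act transitively both on `O` and on each ring, so
`π_{P°}` is constant on `O`, and the number of members of `O` containing a `j`-set `ℓ` depends
only on the ring of `ℓ`. Double counting then gives `∑_{C ∈ O} π_P(C) = ∑_{C ∈ O} π_{P°}(C)
= |O| π_{P°}(C°)`, so some `C ∈ O` has `π_P(C) ≥ π_{P°}(C°)`.
-/

theorem Equiv.Perm.exists_comp_eq_of_card_fiber_eq {α β : Type*} [Fintype α] [DecidableEq β]
    (f g : α → β) (h : ∀ b, Fintype.card {a // f a = b} = Fintype.card {a // g a = b}) :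
    ∃ σ : Equiv.Perm α, ∀ a, g (σ a) = f a :=
  ⟨(Equiv.sigmaFiberEquiv f).symm.trans ((Equiv.sigmaCongrRight fun b =>
      Fintype.equivOfCardEq (h b)).trans (Equiv.sigmaFiberEquiv g)),
    fun a => (Fintype.equivOfCardEq (h (f a)) ⟨a, rfl⟩).2⟩

theorem Finset.sum_mul_eq_of_eq_fiber_average {ι κ K : Type*} [DecidableEq κ] [Semifield K]
    [CharZero K] (s : Finset ι) (r : ι → κ) {f g N : ι → K}
    (hf : ∀ i ∈ s, f i = (∑ x ∈ s with r x = r i, g x) / #{x ∈ s | r x = r i})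
    (hN : ∀ i ∈ s, ∀ i' ∈ s, r i = r i' → N i = N i') :
    ∑ i ∈ s, f i * N i = ∑ i ∈ s, g i * N i := by
  have hr : ∀ i ∈ s, r i ∈ s.image r := fun i hi => mem_image_of_mem r hi
  rw [← sum_fiberwise_of_maps_to hr, ← sum_fiberwise_of_maps_to hr]
  refine sum_congr rfl fun m hm => ?_
  obtain ⟨i₀, hi₀, rfl⟩ := mem_image.mp hm
  have hfiber : ∀ i ∈ {x ∈ s | r x = r i₀}, f i = (∑ x ∈ s with r x = r i₀, g x) /
      #{x ∈ s | r x = r i₀} ∧ N i = N i₀ := by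
    intro i hi
    obtain ⟨his, hri⟩ := mem_filter.mp hi
    exact ⟨hri ▸ hf i his, hN i his i₀ hi₀ hri⟩
  have hcard : (#{x ∈ s | r x = r i₀} : K) ≠ 0 :=
    Nat.cast_ne_zero.mpr (card_ne_zero_of_mem (mem_filter.mpr ⟨hi₀, rfl⟩))
  calc ∑ i ∈ s with r i = r i₀, f i * N i
      = ∑ i ∈ s with r i = r i₀, (∑ x ∈ s with r x = r i₀, g x) /
          #{x ∈ s | r x = r i₀} * N i₀ :=
        sum_congr rfl fun i hi => by rw [(hfiber i hi).1, (hfiber i hi).2]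
    _ = (∑ x ∈ s with r x = r i₀, g x) * N i₀ := by
        rw [sum_const, nsmul_eq_mul, ← mul_assoc, mul_div_cancel₀ _ hcard]
    _ = ∑ i ∈ s with r i = r i₀, g i * N i := by
        rw [sum_mul]; exact sum_congr rfl fun i hi => by rw [(hfiber i hi).2]

variable {α : Type*} [DecidableEq α]

theorem Finset.card_inter_map_perm {σ : Equiv.Perm α} {v : Finset α}
    (hσ : v.map σ.toEmbedding = v) (s : Finset α) : #(v ∩ s.map σ.toEmbedding) = #(v ∩ s) := by
  nth_rw 1 [← hσ]
  rw [← map_inter, card_map]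

variable [Fintype α]

theorem Finset.sum_sum_powersetCard_eq_sum_mul_card {R : Type*} [NonAssocSemiring R]
    (O : Finset (Finset α)) (j : ℕ) (Q : Finset α → R) :
    ∑ C ∈ O, ∑ ℓ ∈ C.powersetCard j, Q ℓ =
      ∑ ℓ ∈ univ.powersetCard j, Q ℓ * #{C ∈ O | ℓ ⊆ C} := by
  rw [sum_comm' (t' := univ.powersetCard j) (s' := fun ℓ => {C ∈ O | ℓ ⊆ C})
    fun C ℓ => by simp only [mem_powersetCard, mem_filter, subset_univ, true_and]; tauto]
  simp only [sum_const, nsmul_eq_mul']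

theorem Finset.exists_perm_map_eq_self_and_map_eq {v s t : Finset α} (hst : #s = #t)
    (hvst : #(v ∩ s) = #(v ∩ t)) :
    ∃ σ : Equiv.Perm α, v.map σ.toEmbedding = v ∧ s.map σ.toEmbedding = t := by
  -- match the four Venn regions of `(v, s)` with those of `(v, t)`
  have hsv : #(s ∩ v) = #(t ∩ v) := by rwa [inter_comm s, inter_comm t]
  obtain ⟨σ, hσ⟩ := Equiv.Perm.exists_comp_eq_of_card_fiber_eq
    (fun a => (decide (a ∈ v), decide (a ∈ s))) (fun a => (decide (a ∈ v), decide (a ∈ t)))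
    fun ⟨b, c⟩ => by
      simp only [Fintype.card_subtype, Prod.mk.injEq]
      cases b <;> cases c <;> simp [filter_and, filter_not, ← compl_eq_univ_sdiff,
        ← sdiff_eq_inter_compl, inter_comm _ s, inter_comm _ t, card_sdiff, hst, hsv]
  simp only [Prod.mk.injEq, decide_eq_decide] at hσ
  refine ⟨σ, ?_, ?_⟩ <;> ext x <;> simp [mem_map_equiv, ← (hσ (σ.symm x))]

theorem Finset.sum_powersetCard_eq_of_card_inter_eq (v : Finset α) {j : ℕ} {M : Type*}
    [AddCommMonoid M] {Q : Finset α → M}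
    (hQ : ∀ ℓ ℓ', #ℓ = j → #ℓ' = j → #(v ∩ ℓ) = #(v ∩ ℓ') → Q ℓ = Q ℓ')
    {C C' : Finset α} (hC : #C = #C') (hvC : #(v ∩ C) = #(v ∩ C')) :
    ∑ ℓ ∈ C.powersetCard j, Q ℓ = ∑ ℓ ∈ C'.powersetCard j, Q ℓ := by
  obtain ⟨σ, hσv, rfl⟩ := exists_perm_map_eq_self_and_map_eq hC hvC
  refine sum_equiv σ.finsetCongr (fun ℓ => ?_) fun ℓ hℓ => ?_
  · simp [Equiv.finsetCongr_apply, mem_powersetCard]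
  · have hℓ : #ℓ = j := (mem_powersetCard.mp hℓ).2
    exact hQ _ _ hℓ (by simp [Equiv.finsetCongr_apply, hℓ])
      (by rw [Equiv.finsetCongr_apply, card_inter_map_perm hσv])

theorem Finset.card_filter_superset_eq_of_card_inter_eq (v : Finset α) (k m : ℕ) {ℓ ℓ' : Finset α}
    (hℓ : #ℓ = #ℓ') (hvℓ : #(v ∩ ℓ) = #(v ∩ ℓ')) :
    #{C ∈ {C ∈ univ.powersetCard k | #(v ∩ C) = m} | ℓ ⊆ C} =
      #{C ∈ {C ∈ univ.powersetCard k | #(v ∩ C) = m} | ℓ' ⊆ C} := by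
  obtain ⟨σ, hσv, rfl⟩ := exists_perm_map_eq_self_and_map_eq hℓ hvℓ
  refine card_equiv σ.finsetCongr fun C => ?_
  simp [Equiv.finsetCongr_apply, mem_powersetCard, card_inter_map_perm hσv]

theorem concentric_worst_case_general (n j k : ℕ)
    (P : Finset (Fin n) → ℝ)
    (v : Finset (Fin n))
    -- `Pc` is the concentric distribution centered at `v` with the same ring weights as `P`
    (Pc : Finset (Fin n) → ℝ)
    (hPc : ∀ ℓ : Finset (Fin n), ℓ.card = j →
      Pc ℓ = (∑ ℓ' ∈ ((univ : Finset (Fin n)).powersetCard j).filter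
                (fun x => (v ∩ x).card = (v ∩ ℓ).card), P ℓ')
          / ((((univ : Finset (Fin n)).powersetCard j).filter
                (fun x => (v ∩ x).card = (v ∩ ℓ).card)).card : ℝ))
    (Co : Finset (Fin n)) (hCo : Co ∈ (univ : Finset (Fin n)).powersetCard k) :
    ∃ C ∈ (univ : Finset (Fin n)).powersetCard k,
      ∑ ℓ ∈ Co.powersetCard j, Pc ℓ ≤ ∑ ℓ ∈ C.powersetCard j, P ℓ := by
  set O := {C ∈ (univ : Finset (Fin n)).powersetCard k | #(v ∩ C) = #(v ∩ Co)}
  have hCoO : Co ∈ O := mem_filter.mpr ⟨hCo, rfl⟩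
  have hconst : ∀ C ∈ O, ∑ ℓ ∈ C.powersetCard j, Pc ℓ = ∑ ℓ ∈ Co.powersetCard j, Pc ℓ := by
    intro C hC
    obtain ⟨hCk, hvC⟩ := mem_filter.mp hC
    refine sum_powersetCard_eq_of_card_inter_eq v (fun ℓ ℓ' hℓ hℓ' hvℓ => ?_) ?_ hvC
    · rw [hPc ℓ hℓ, hPc ℓ' hℓ', hvℓ]
    · rw [(mem_powersetCard.mp hCk).2, (mem_powersetCard.mp hCo).2]
  have hsum : ∑ C ∈ O, ∑ ℓ ∈ C.powersetCard j, Pc ℓ = ∑ C ∈ O, ∑ ℓ ∈ C.powersetCard j, P ℓ := by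
    rw [sum_sum_powersetCard_eq_sum_mul_card, sum_sum_powersetCard_eq_sum_mul_card]
    refine sum_mul_eq_of_eq_fiber_average _ (fun ℓ => #(v ∩ ℓ))
      (fun ℓ hℓ => hPc ℓ (mem_powersetCard.mp hℓ).2) fun ℓ hℓ ℓ' hℓ' hvℓ => ?_
    rw [card_filter_superset_eq_of_card_inter_eq v k _
      ((mem_powersetCard.mp hℓ).2.trans (mem_powersetCard.mp hℓ').2.symm) hvℓ]
  obtain ⟨C, hC, hle⟩ := exists_le_of_sum_le ⟨Co, hCoO⟩
    ((sum_congr rfl hconst).symm.trans hsum).le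
  exact ⟨C, (mem_filter.mp hC).1, hle⟩

theorem concentric_worst_case (n j k : ℕ) (hj : 1 < j) (hjk : j ≤ k) (hkn : k < n)
    (P : Finset (Fin n) → ℝ) (hP0 : ∀ ℓ, 0 ≤ P ℓ)
    (hP1 : ∑ ℓ ∈ (univ : Finset (Fin n)).powersetCard j, P ℓ = 1)
    (v : Finset (Fin n)) (hv : v.card = j)
    -- `Pc` is the concentric distribution centered at `v` with the same ring weights as `P`
    (Pc : Finset (Fin n) → ℝ)
    (hPc : ∀ ℓ : Finset (Fin n), ℓ.card = j →
      Pc ℓ = (∑ ℓ' ∈ ((univ : Finset (Fin n)).powersetCard j).filter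
                (fun x => (v ∩ x).card = (v ∩ ℓ).card), P ℓ')
          / ((((univ : Finset (Fin n)).powersetCard j).filter
                (fun x => (v ∩ x).card = (v ∩ ℓ).card)).card : ℝ))
    (Co : Finset (Fin n)) (hCo : Co ∈ (univ : Finset (Fin n)).powersetCard k)
    (hmax : ∀ C ∈ (univ : Finset (Fin n)).powersetCard k,
      ∑ ℓ ∈ C.powersetCard j, Pc ℓ ≤ ∑ ℓ ∈ Co.powersetCard j, Pc ℓ) :
    ∃ C ∈ (univ : Finset (Fin n)).powersetCard k,
      ∑ ℓ ∈ Co.powersetCard j, Pc ℓ ≤ ∑ ℓ ∈ C.powersetCard j, P ℓ :=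
  concentric_worst_case_general n j k P v Pc hPc Co hCo
end

section
/- For natural numbers j ≤ k, m < r (more precisely m ≤ r - 1 with b-quantities defined), the inequality b_{r,m} ≥ b_{r,m+1} holds if and only if r ≤ j·(k+1+m-j)/(k+1), where b_{r,m} = [r!/(r-m)!]·[(k+m-j)!/(k+m-j-r)!]·[(j-m)!/j!]·[(n-j-r)!/(n-j)!]. -/
/-!
Writing the factorial quotients as descending factorials, consecutive terms satisfy
`b_{r,m+1} / b_{r,m} = (r - m)(k + m + 1 - j) / ((j - m)(k + m + 1 - j - r))`, so `b_{r,m+1} ≤ b_{r,m}`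
says that this ratio is at most one. The identity
`(j - m)(k + m + 1 - j - r) - (r - m)(k + m + 1 - j) = j(k + 1 + m - j) - r(k + 1)`
turns that into the stated bound on `r`.
-/

open Nat

theorem Nat.cast_factorial_div_factorial_sub {K : Type*} [Field K] [CharZero K] {a t : ℕ}
    (h : t ≤ a) : (a ! : K) / (a - t)! = a.descFactorial t := by
  rw [div_eq_iff (by exact_mod_cast factorial_ne_zero _), ← factorial_mul_descFactorial h,
    cast_mul, mul_comm]

theorem le_iff_le_of_mul_eq {K : Type*} [Field K] [LinearOrder K] [IsStrictOrderedRing K]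
    {x y p q : K} (hy : 0 < y) (hq : 0 < q) (h : x * q = y * p) : x ≤ y ↔ p ≤ q := by
  rw [← mul_le_mul_iff_left₀ hq, h, mul_le_mul_iff_right₀ hy]

theorem sub_mul_le_sub_mul_iff {j k r m : ℕ} (hmr : m ≤ r) (hmj : m ≤ j)
    (hjr : j + r ≤ k + m + 1) :
    (r - m) * (k + m + 1 - j) ≤ (j - m) * (k + m + 1 - j - r)
      ↔ r * (k + 1) ≤ j * (k + 1 + m - j) := by
  zify [hmr, hmj, show j ≤ k + 1 + m by omega, show j ≤ k + m + 1 by omega,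
    show r ≤ k + m + 1 - j by omega]
  have cross : ((j : ℤ) - m) * (k + m + 1 - j - r) - (r - m) * (k + m + 1 - j)
      = j * (k + 1 + m - j) - r * (k + 1) := by ring
  constructor <;> intro h <;> linarith

def bCoeff (n j k r m : ℕ) : ℚ :=
  ((r ! : ℚ) / ((r - m)! : ℚ)) * (((k + m - j)! : ℚ) / ((k + m - j - r)! : ℚ))
    * (((j - m)! : ℚ) / (j ! : ℚ)) * (((n - j - r)! : ℚ) / ((n - j)! : ℚ))

namespace bCoeff

variable {n j k r m : ℕ}

theorem pos : 0 < bCoeff n j k r m := by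
  unfold bCoeff; positivity

theorem eq_descFactorial (hmr : m ≤ r) (hrk : r ≤ k + m - j) (hmj : m ≤ j) :
    bCoeff n j k r m = r.descFactorial m * (k + m - j).descFactorial r / j.descFactorial m
      * ((n - j - r)! / (n - j)!) := by
  rw [bCoeff, cast_factorial_div_factorial_sub hmr, cast_factorial_div_factorial_sub hrk,
    ← inv_div, cast_factorial_div_factorial_sub hmj]
  ring

theorem succ_mul (hmr : m + 1 ≤ r) (hrk : r ≤ k + m - j) (hmj : m + 1 ≤ j) :
    bCoeff n j k r (m + 1) * ((j - m) * (k + m + 1 - j - r) : ℕ)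
      = bCoeff n j k r m * ((r - m) * (k + m + 1 - j) : ℕ) := by
  have hsucc : k + (m + 1) - j = k + m - j + 1 := by omega
  have hshift : ((k + m - j + 1 - r : ℕ) : ℚ) * (k + m - j + 1).descFactorial r
      = ((k + m - j + 1 : ℕ) : ℚ) * (k + m - j).descFactorial r := by
    exact_mod_cast succ_descFactorial (k + m - j) r
  rw [eq_descFactorial hmr (by omega) hmj, eq_descFactorial (by omega) hrk (by omega), hsucc,
    descFactorial_succ, descFactorial_succ, show k + m + 1 - j - r = k + m - j + 1 - r by omega,
    show k + m + 1 - j = k + m - j + 1 by omega]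
  have hj : (j.descFactorial m : ℚ) ≠ 0 := by
    exact_mod_cast (descFactorial_pos.2 (by omega)).ne'
  have hjm : ((j - m : ℕ) : ℚ) ≠ 0 := by exact_mod_cast (show j - m ≠ 0 by omega)
  push_cast at hshift ⊢
  field_simp
  linear_combination ((r - m : ℕ) * r.descFactorial m : ℚ) * hshift

end bCoeff

theorem b_mono_in_m_iff_general (n j k r m : ℕ)
    (hmr : m + 1 ≤ r) (hrk : r ≤ k + m - j) (hmj : m + 1 ≤ j) :
    (((r ! : ℚ) / ((r - (m + 1))! : ℚ))
          * (((k + (m + 1) - j)! : ℚ) / ((k + (m + 1) - j - r)! : ℚ))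
          * (((j - (m + 1))! : ℚ) / (j ! : ℚ))
          * (((n - j - r)! : ℚ) / ((n - j)! : ℚ))
        ≤ ((r ! : ℚ) / ((r - m)! : ℚ))
          * (((k + m - j)! : ℚ) / ((k + m - j - r)! : ℚ))
          * (((j - m)! : ℚ) / (j ! : ℚ))
          * (((n - j - r)! : ℚ) / ((n - j)! : ℚ)))
      ↔ r * (k + 1) ≤ j * (k + 1 + m - j) := by
  change bCoeff n j k r (m + 1) ≤ bCoeff n j k r m ↔ _
  have hq : (0 : ℚ) < ((j - m) * (k + m + 1 - j - r) : ℕ) :=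
    cast_pos.2 (Nat.mul_pos (by omega) (by omega))
  rw [le_iff_le_of_mul_eq bCoeff.pos hq (bCoeff.succ_mul hmr hrk hmj), Nat.cast_le]
  exact sub_mul_le_sub_mul_iff (by omega) (by omega) (by omega)

theorem b_mono_in_m_iff (n j k r m : ℕ) (hjk : j ≤ k) (hkn : k ≤ n)
    (hmr : m + 1 ≤ r) (hrD : r ≤ min j (n - j)) (hrk : r ≤ k + m - j) (hmj : m + 1 ≤ j) :
    (((r ! : ℚ) / ((r - (m + 1))! : ℚ))
          * (((k + (m + 1) - j)! : ℚ) / ((k + (m + 1) - j - r)! : ℚ))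
          * (((j - (m + 1))! : ℚ) / (j ! : ℚ))
          * (((n - j - r)! : ℚ) / ((n - j)! : ℚ))
        ≤ ((r ! : ℚ) / ((r - m)! : ℚ))
          * (((k + m - j)! : ℚ) / ((k + m - j - r)! : ℚ))
          * (((j - m)! : ℚ) / (j ! : ℚ))
          * (((n - j - r)! : ℚ) / ((n - j)! : ℚ)))
      ↔ r * (k + 1) ≤ j * (k + 1 + m - j) :=
  b_mono_in_m_iff_general n j k r m hmr hrk hmj
end

section
/- Suppose j(k+1) ≥ j², 1 < j ≤ k < n, and ρ ≤ j·(1 - j/(k+1)) with ρ < min(j, n-j). If P is a probability distribution on j-subsets of [n] supported on the ball B_ρ(v) = {w : |w ∩ v| ≥ j - ρ} around a fixed j-subset v, then there exists a k-subset C of [n] with approval proportion π_P(C) ≥ C(k-j, ρ)/C(n-j, ρ). -/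
/-!
Average `π_P` over the `k`-sets `C ⊇ v`, chosen uniformly. A `j`-set `ℓ` with `t = |ℓ \ v|` lies
in a fraction `C(n-j-t, k-j-t) / C(n-j, k-j) = C(k-j, t) / C(n-j, t)` of them, and this ratio
decreases in `t`. Since `P` is supported on `t ≤ ρ`, the average, hence some `π_P(C)`, is at
least `C(k-j, ρ) / C(n-j, ρ)`.
-/

open Finset

namespace Nat

theorem le_sub_of_mul_succ_le_mul_succ_sub {j k ρ : ℕ} (h : ρ * (k + 1) ≤ j * (k + 1 - j)) :
    ρ ≤ k - j := by
  rcases le_or_gt j k with hjk | hkj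
  · obtain ⟨s, rfl⟩ := Nat.exists_eq_add_of_le hjk
    rw [show j + s + 1 - j = s + 1 by omega] at h
    rw [show j + s - j = s by omega]
    nlinarith
  · rw [Nat.sub_eq_zero_of_le hkj, mul_zero, Nat.le_zero, Nat.mul_eq_zero] at h
    omega

theorem choose_mul_choose_le_choose_mul_choose {q m t r : ℕ} (hqm : q ≤ m) (htr : t ≤ r) :
    q.choose r * m.choose t ≤ q.choose t * m.choose r := by
  have hdesc : q.descFactorial r * m.descFactorial t ≤ q.descFactorial t * m.descFactorial r := by
    rw [← descFactorial_mul_descFactorial (n := q) htr,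
      ← descFactorial_mul_descFactorial (n := m) htr, mul_right_comm, mul_comm (q.descFactorial t)]
    gcongr
  simp only [descFactorial_eq_factorial_mul_choose] at hdesc
  refine Nat.le_of_mul_le_mul_left (c := r ! * t !) ?_ (mul_pos r.factorial_pos t.factorial_pos)
  convert hdesc using 1 <;> ring

theorem choose_mul_choose_le_choose_mul_choose_sub {q m t r : ℕ} (hqm : q ≤ m) (htr : t ≤ r) :
    q.choose r * m.choose q ≤ m.choose r * (m - t).choose (q - t) := by
  rcases lt_or_ge q t with htq | htq
  · simp [choose_eq_zero_of_lt (htq.trans_le htr)]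
  refine Nat.le_of_mul_le_mul_left (c := m.choose t) ?_ (choose_pos (htq.trans hqm))
  calc m.choose t * (q.choose r * m.choose q)
      = m.choose q * (q.choose r * m.choose t) := by ring
    _ ≤ m.choose q * (q.choose t * m.choose r) :=
      Nat.mul_le_mul_left _ (choose_mul_choose_le_choose_mul_choose hqm htr)
    _ = m.choose t * (m.choose r * (m - t).choose (q - t)) := by
      rw [← mul_assoc, choose_mul htq]; ring

end Nat

namespace Finset

variable {α : Type*} [Fintype α] [DecidableEq α]

theorem sum_sum_powersetCard_eq_sum_card_filter_mul (F : Finset (Finset α)) (j : ℕ)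
    (P : Finset α → ℝ) :
    ∑ C ∈ F, ∑ ℓ ∈ C.powersetCard j, P ℓ =
      ∑ ℓ ∈ (univ : Finset α).powersetCard j, #(F.filter (ℓ ⊆ ·)) * P ℓ := by
  rw [sum_comm' (s' := fun ℓ => F.filter (ℓ ⊆ ·)) (t' := univ.powersetCard j)]
  · simp only [sum_const, nsmul_eq_mul]
  · simp only [mem_powersetCard, mem_filter, subset_univ, true_and]
    tauto

theorem exists_le_sum_powersetCard_of_mul_card_le {F : Finset (Finset α)} (hF : F.Nonempty)
    {j : ℕ} {P : Finset α → ℝ} (hP0 : ∀ ℓ, 0 ≤ P ℓ)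
    (hP1 : ∑ ℓ ∈ (univ : Finset α).powersetCard j, P ℓ = 1) {c : ℝ}
    (hc : ∀ ℓ ∈ (univ : Finset α).powersetCard j, P ℓ ≠ 0 → c * #F ≤ #(F.filter (ℓ ⊆ ·))) :
    ∃ C ∈ F, c ≤ ∑ ℓ ∈ C.powersetCard j, P ℓ := by
  refine exists_le_of_sum_le hF ?_
  calc ∑ _C ∈ F, c = ∑ ℓ ∈ (univ : Finset α).powersetCard j, (c * #F) * P ℓ := by
        rw [← mul_sum, hP1, sum_const, nsmul_eq_mul]; ring
    _ ≤ ∑ ℓ ∈ (univ : Finset α).powersetCard j, #(F.filter (ℓ ⊆ ·)) * P ℓ := by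
        refine sum_le_sum fun ℓ hℓ => ?_
        rcases eq_or_ne (P ℓ) 0 with hPℓ | hPℓ
        · simp [hPℓ]
        · exact mul_le_mul_of_nonneg_right (hc ℓ hℓ hPℓ) (hP0 ℓ)
    _ = ∑ C ∈ F, ∑ ℓ ∈ C.powersetCard j, P ℓ :=
        (sum_sum_powersetCard_eq_sum_card_filter_mul F j P).symm

theorem choose_mul_choose_le_choose_mul_card_filter_superset {v ℓ : Finset α} {k ρ : ℕ}
    (hvk : #v ≤ k) (hk : k ≤ Fintype.card α) (hℓ : #(ℓ \ v) ≤ ρ) :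
    (k - #v).choose ρ * (Fintype.card α - #v).choose (k - #v) ≤
      (Fintype.card α - #v).choose ρ *
        #(((univ : Finset α).powersetCard k).filter (v ⊆ ·) |>.filter (ℓ ⊆ ·)) := by
  rcases lt_or_ge (k - #v) #(ℓ \ v) with hlarge | hsmall
  · simp [Nat.choose_eq_zero_of_lt (hlarge.trans_le hℓ)]
  have hunion : #(v ∪ ℓ) = #v + #(ℓ \ v) := by
    rw [← card_union_of_disjoint disjoint_sdiff, union_sdiff_self_eq_union]
  have hcount : #(((univ : Finset α).powersetCard k).filter (v ⊆ ·) |>.filter (ℓ ⊆ ·)) =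
      (Fintype.card α - #v - #(ℓ \ v)).choose (k - #v - #(ℓ \ v)) := by
    simp only [filter_filter, ← union_subset_iff]
    rw [card_filter_powersetCard_subset _ _ _ (subset_univ _) (by omega), hunion, card_univ,
      Nat.sub_add_eq, Nat.sub_add_eq]
  rw [hcount]
  exact Nat.choose_mul_choose_le_choose_mul_choose_sub (by omega) hℓ

end Finset

theorem main_theorem_ball_supported_general (n j k ρ : ℕ) (hjk : j ≤ k) (hkn : k < n)
    (hρ : ρ * (k + 1) ≤ j * (k + 1 - j))
    (v : Finset (Fin n)) (hv : v.card = j)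
    (P : Finset (Fin n) → ℝ) (hP0 : ∀ ℓ, 0 ≤ P ℓ)
    (hP1 : ∑ ℓ ∈ (univ : Finset (Fin n)).powersetCard j, P ℓ = 1)
    (hsupp : ∀ ℓ : Finset (Fin n), ℓ.card = j → (ℓ ∩ v).card < j - ρ → P ℓ = 0) :
    ∃ C ∈ (univ : Finset (Fin n)).powersetCard k,
      ((k - j).choose ρ : ℝ) / ((n - j).choose ρ : ℝ) ≤ ∑ ℓ ∈ C.powersetCard j, P ℓ := by
  have hρk : ρ ≤ k - j := Nat.le_sub_of_mul_succ_le_mul_succ_sub hρ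
  set F := ((univ : Finset (Fin n)).powersetCard k).filter (v ⊆ ·)
  have hF : #F = (n - j).choose (k - j) := by
    simp [F, card_filter_powersetCard_subset, hv, hjk]
  obtain ⟨C₀, hvC₀, -, hC₀⟩ := exists_subsuperset_card_eq (subset_univ v) (hv ▸ hjk)
    (by simpa using hkn.le)
  have hpos : (0 : ℝ) < (n - j).choose ρ := by
    exact_mod_cast Nat.choose_pos (by omega)
  have hball : ∀ ℓ ∈ (univ : Finset (Fin n)).powersetCard j, P ℓ ≠ 0 → #(ℓ \ v) ≤ ρ := by
    intro ℓ hℓ hPℓ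
    have hsplit := card_inter_add_card_sdiff ℓ v
    have hcard := (mem_powersetCard.mp hℓ).2
    have hnear := mt (hsupp ℓ hcard) hPℓ
    omega
  obtain ⟨C, hC, hle⟩ := exists_le_sum_powersetCard_of_mul_card_le (F := F)
    ⟨C₀, by simp [F, hvC₀, hC₀]⟩ hP0 hP1 (c := ((k - j).choose ρ : ℝ) / (n - j).choose ρ)
    fun ℓ hℓ hPℓ => by
      have hcount := choose_mul_choose_le_choose_mul_card_filter_superset (hv ▸ hjk)
        (by simpa using hkn.le) (hball ℓ hℓ hPℓ)
      rw [Fintype.card_fin, hv] at hcount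
      rw [hF, div_mul_eq_mul_div, div_le_iff₀ hpos, mul_comm _ ((n - j).choose ρ : ℝ)]
      exact_mod_cast hcount
  exact ⟨C, (mem_filter.mp hC).1, hle⟩

theorem main_theorem_ball_supported (n j k ρ : ℕ) (hj : 1 < j) (hjk : j ≤ k) (hkn : k < n)
    (hρ : ρ * (k + 1) ≤ j * (k + 1 - j)) (hρD : ρ < min j (n - j))
    (v : Finset (Fin n)) (hv : v.card = j)
    (P : Finset (Fin n) → ℝ) (hP0 : ∀ ℓ, 0 ≤ P ℓ)
    (hP1 : ∑ ℓ ∈ (univ : Finset (Fin n)).powersetCard j, P ℓ = 1)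
    (hsupp : ∀ ℓ : Finset (Fin n), ℓ.card = j → (ℓ ∩ v).card < j - ρ → P ℓ = 0) :
    ∃ C ∈ (univ : Finset (Fin n)).powersetCard k,
      ((k - j).choose ρ : ℝ) / ((n - j).choose ρ : ℝ) ≤ ∑ ℓ ∈ C.powersetCard j, P ℓ :=
  main_theorem_ball_supported_general n j k ρ hjk hkn hρ v hv P hP0 hP1 hsupp
end

section
/- Suppose 1 < j ≤ k < n, ρ(k+1) ≤ j(k+1-j), ρ < min(j, n-j), and let P be a probability distribution on j-subsets of [n] such that the total weight P assigns to the ball B_ρ(v) = {w : |w ∩ v| ≥ j - ρ} is at least α. Then there exists a k-subset C with π_P(C) ≥ α · C(k-j, ρ)/C(n-j, ρ). -/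
/-!
Average `π_P` over the `k`-sets `C ⊇ v`, of which there are `C(n-j, k-j)`. A `j`-set `ℓ` in the
ball has `|v ∪ ℓ| ≤ j + ρ`, so it lies in at least `C(n-j-ρ, k-j-ρ)` of them; double counting
bounds the average by `α · C(n-j-ρ, k-j-ρ) / C(n-j, k-j) = α · C(k-j, ρ) / C(n-j, ρ)`.
-/

open Finset

section

variable {ι : Type*} [DecidableEq ι]

lemma card_union_le_of_sub_le_card_inter {s t : Finset ι} {j ρ : ℕ} (hs : #s = j) (ht : #t = j)
    (hst : j - ρ ≤ #(t ∩ s)) : #(s ∪ t) ≤ j + ρ := by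
  have := card_union_add_card_inter s t
  rw [inter_comm] at this
  omega

lemma sum_card_filter_superset_mul_le_sum_sum_powersetCard (T B : Finset (Finset ι)) {j : ℕ}
    (hB : ∀ ℓ ∈ B, #ℓ = j) {P : Finset ι → ℝ} (hP : ∀ ℓ, 0 ≤ P ℓ) :
    ∑ ℓ ∈ B, (#{C ∈ T | ℓ ⊆ C} : ℝ) * P ℓ ≤ ∑ C ∈ T, ∑ ℓ ∈ C.powersetCard j, P ℓ := by
  calc ∑ ℓ ∈ B, (#{C ∈ T | ℓ ⊆ C} : ℝ) * P ℓ
      = ∑ ℓ ∈ B, ∑ _C ∈ T.bipartiteBelow (fun C ℓ ↦ ℓ ⊆ C) ℓ, P ℓ := by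
        simp only [sum_const, nsmul_eq_mul, bipartiteBelow]
    _ = ∑ C ∈ T, ∑ ℓ ∈ B.bipartiteAbove (fun C ℓ ↦ ℓ ⊆ C) C, P ℓ :=
        (sum_sum_bipartiteAbove_eq_sum_sum_bipartiteBelow _ fun _ ℓ ↦ P ℓ).symm
    _ ≤ ∑ C ∈ T, ∑ ℓ ∈ C.powersetCard j, P ℓ := by
        refine sum_le_sum fun C _ ↦ sum_le_sum_of_subset_of_nonneg ?_ fun ℓ _ _ ↦ hP ℓ
        intro ℓ hℓ
        rw [mem_bipartiteAbove] at hℓ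
        exact mem_powersetCard.2 ⟨hℓ.2, hB ℓ hℓ.1⟩

lemma exists_mul_sum_le_sum_powersetCard {T B : Finset (Finset ι)} (hT : T.Nonempty) {j m : ℕ}
    (hB : ∀ ℓ ∈ B, #ℓ = j) (hm : ∀ ℓ ∈ B, m ≤ #{C ∈ T | ℓ ⊆ C}) {P : Finset ι → ℝ}
    (hP : ∀ ℓ, 0 ≤ P ℓ) :
    ∃ C ∈ T, m / #T * ∑ ℓ ∈ B, P ℓ ≤ ∑ ℓ ∈ C.powersetCard j, P ℓ := by
  refine exists_le_of_le_expect hT ?_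
  have hcount : m * ∑ ℓ ∈ B, P ℓ ≤ ∑ C ∈ T, ∑ ℓ ∈ C.powersetCard j, P ℓ := by
    calc (m : ℝ) * ∑ ℓ ∈ B, P ℓ = ∑ ℓ ∈ B, (m : ℝ) * P ℓ := mul_sum _ _ _
      _ ≤ ∑ ℓ ∈ B, (#{C ∈ T | ℓ ⊆ C} : ℝ) * P ℓ := by
          gcongr with ℓ hℓ
          · exact hP ℓ
          · exact hm ℓ hℓ
      _ ≤ _ := sum_card_filter_superset_mul_le_sum_sum_powersetCard T B hB hP
  rw [expect_eq_sum_div_card, div_mul_eq_mul_div]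
  gcongr

lemma choose_le_card_filter_powersetCard_subset {s t : Finset ι} {k m : ℕ} (hst : s ⊆ t)
    (hs : #s ≤ m) (hmk : m ≤ k) (hkt : k ≤ #t) :
    (#t - m).choose (k - m) ≤ #{C ∈ t.powersetCard k | s ⊆ C} := by
  rw [card_filter_powersetCard_subset s t k hst (hs.trans hmk),
    ← Nat.choose_symm (by omega), ← Nat.choose_symm (n := #t - #s) (by omega)]
  convert Nat.choose_le_choose (#t - k) (Nat.sub_le_sub_left hs #t) using 2 <;> omega

end

lemma Nat.cast_choose_sub_div_choose {N a ρ : ℕ} (hρa : ρ ≤ a) (haN : a ≤ N) :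
    ((N - ρ).choose (a - ρ) : ℝ) / N.choose a = a.choose ρ / N.choose ρ := by
  have hNa : (N.choose a : ℝ) ≠ 0 := by exact_mod_cast (Nat.choose_pos haN).ne'
  have hNρ : (N.choose ρ : ℝ) ≠ 0 := by exact_mod_cast (Nat.choose_pos (hρa.trans haN)).ne'
  rw [div_eq_div_iff hNa hNρ, mul_comm, mul_comm (a.choose ρ : ℝ)]
  exact_mod_cast (Nat.choose_mul hρa).symm

theorem corollary_partial_ball_general (n j k ρ : ℕ) (hjk : j ≤ k) (hkn : k < n)
    (v : Finset (Fin n)) (hv : v.card = j) (α : ℝ)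
    (P : Finset (Fin n) → ℝ) (hP0 : ∀ ℓ, 0 ≤ P ℓ)
    (hball : α ≤ ∑ ℓ ∈ ((univ : Finset (Fin n)).powersetCard j).filter
        (fun ℓ => j - ρ ≤ (ℓ ∩ v).card), P ℓ) :
    ∃ C ∈ (univ : Finset (Fin n)).powersetCard k,
      α * (((k - j).choose ρ : ℝ) / ((n - j).choose ρ : ℝ))
        ≤ ∑ ℓ ∈ C.powersetCard j, P ℓ := by
  have hkuniv : k ≤ #(univ : Finset (Fin n)) := by simpa using hkn.le
  obtain hkj | hρ := lt_or_ge (k - j) ρ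
  · obtain ⟨C, hC⟩ := powersetCard_nonempty.2 hkuniv
    refine ⟨C, hC, ?_⟩
    simpa [Nat.choose_eq_zero_of_lt hkj] using sum_nonneg fun ℓ _ ↦ hP0 ℓ
  set T := {C ∈ (univ : Finset (Fin n)).powersetCard k | v ⊆ C}
  have hT : T.Nonempty := by
    obtain ⟨C, hvC, -, hC⟩ := exists_subsuperset_card_eq (subset_univ v) (hv ▸ hjk) hkuniv
    exact ⟨C, mem_filter.2 ⟨mem_powersetCard_univ.2 hC, hvC⟩⟩
  have hTcard : #T = (n - j).choose (k - j) := by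
    simp [T, card_filter_powersetCard_subset v univ k (subset_univ v) (hv ▸ hjk), hv]
  set B := {ℓ ∈ (univ : Finset (Fin n)).powersetCard j | j - ρ ≤ #(ℓ ∩ v)}
  have hB : ∀ ℓ ∈ B, #ℓ = j := fun ℓ hℓ ↦ mem_powersetCard_univ.1 (mem_filter.1 hℓ).1
  have hBT : ∀ ℓ ∈ B, (n - j - ρ).choose (k - j - ρ) ≤ #{C ∈ T | ℓ ⊆ C} := by
    intro ℓ hℓ
    have hvℓ := card_union_le_of_sub_le_card_inter hv (hB ℓ hℓ) (mem_filter.1 hℓ).2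
    simp only [T, filter_filter, ← union_subset_iff]
    simpa [Nat.sub_sub] using
      choose_le_card_filter_powersetCard_subset (subset_univ (v ∪ ℓ)) hvℓ (by omega) hkuniv
  obtain ⟨C, hCT, hC⟩ := exists_mul_sum_le_sum_powersetCard hT hB hBT hP0
  refine ⟨C, (mem_filter.1 hCT).1, ?_⟩
  calc α * (((k - j).choose ρ : ℝ) / (n - j).choose ρ)
      = ((n - j - ρ).choose (k - j - ρ) : ℝ) / #T * α := by
        rw [hTcard, Nat.cast_choose_sub_div_choose hρ (by omega), mul_comm]
    _ ≤ _ := by gcongr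
    _ ≤ _ := hC

theorem corollary_partial_ball (n j k ρ : ℕ) (hj : 1 < j) (hjk : j ≤ k) (hkn : k < n)
    (hρ : ρ * (k + 1) ≤ j * (k + 1 - j)) (hρD : ρ < min j (n - j))
    (v : Finset (Fin n)) (hv : v.card = j) (α : ℝ) (hα0 : 0 ≤ α) (hα1 : α ≤ 1)
    (P : Finset (Fin n) → ℝ) (hP0 : ∀ ℓ, 0 ≤ P ℓ)
    (hP1 : ∑ ℓ ∈ (univ : Finset (Fin n)).powersetCard j, P ℓ = 1)
    (hball : α ≤ ∑ ℓ ∈ ((univ : Finset (Fin n)).powersetCard j).filter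
        (fun ℓ => j - ρ ≤ (ℓ ∩ v).card), P ℓ) :
    ∃ C ∈ (univ : Finset (Fin n)).powersetCard k,
      α * (((k - j).choose ρ : ℝ) / ((n - j).choose ρ : ℝ))
        ≤ ∑ ℓ ∈ C.powersetCard j, P ℓ :=
  corollary_partial_ball_general n j k ρ hjk hkn v hv α P hP0 hball
end
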